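/- Let R be a quasi-consistent Riordan array, i.e., the Riordan array determined by a nonnegative A-sequence (a_n) and Z-sequence (z_n) with z_n = a_{n+1} for all n. If (a_n) is a Pólya frequency (PF) sequence, then R is totally positive (TP). -/

import Mathlib

/-!
Quasi-consistency says exactly that deleting the first row of `R` leaves `R * P`, where `P` is
the Toeplitz matrix of `a` with its first row deleted (the production matrix of `R`); `P` is TP
because `a` is PF. A minor of `R` through row `0` reduces, by expansion along that row, to a
smaller minor, and any other minor is a minor of `R * P`, which the Cauchy–Binet formula writes
as a sum of products of minors of `P` and minors of `R` taken one row higher up. Induction on the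
rows then gives total positivity.
-/

/-- An infinite real matrix `M` is totally positive (TP) if every minor
(determinant of a square submatrix with rows and columns chosen in
increasing order) is nonnegative. -/
def IsTP (M : ℕ → ℕ → ℝ) : Prop :=
  ∀ k : ℕ, ∀ rows cols : Fin k → ℕ, StrictMono rows → StrictMono cols →
    0 ≤ (Matrix.of fun i j => M (rows i) (cols j)).det

/-- The Toeplitz matrix `[a_{i-j}]` of a sequence `a` (with `a m = 0` for `m < 0`). -/
def toeplitz (a : ℕ → ℝ) : ℕ → ℕ → ℝ := fun i j => if j ≤ i then a (i - j) else 0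

/-- A nonnegative sequence is a Pólya frequency (PF) sequence
if its Toeplitz matrix is TP. -/
def IsPF (a : ℕ → ℝ) : Prop := IsTP (toeplitz a)

open Finset

namespace Matrix

variable {R : Type*} [CommRing R] {k : ℕ} {ι : Type*} [Fintype ι]

theorem det_mul_eq_sum_prod_mul_det (A : Matrix (Fin k) ι R) (B : Matrix ι (Fin k) R) :
    (A * B).det = ∑ f : Fin k → ι, (∏ i, A i (f i)) * (B.submatrix f id).det := by
  have hrows : A * B = fun i => ∑ s, A i s • B s := by
    ext i j
    simp [mul_apply]
  calc (A * B).det = detRowAlternating.toMultilinearMap (fun i => ∑ s, A i s • B s) := by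
        rw [← hrows]; rfl
    _ = ∑ f : Fin k → ι, detRowAlternating.toMultilinearMap (fun i => A i (f i) • B (f i)) :=
        MultilinearMap.map_sum _ _
    _ = _ := sum_congr rfl fun f _ => MultilinearMap.map_smul_univ _ _ _

theorem det_mul_eq_sum_strictMono [LinearOrder ι] (A : Matrix (Fin k) ι R)
    (B : Matrix ι (Fin k) R) :
    (A * B).det = ∑ g : Fin k → ι with StrictMono g,
      (A.submatrix id g).det * (B.submatrix g id).det := by
  have hnoninj (f : Fin k → ι) (hf : ¬ Function.Injective f) : (B.submatrix f id).det = 0 := by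
    obtain ⟨i, j, hij, hne⟩ := Function.not_injective_iff.mp hf
    exact det_zero_of_row_eq hne (by ext; simp [hij])
  have hperm (g : Fin k → ι) (σ : Equiv.Perm (Fin k)) :
      (B.submatrix (g ∘ σ) id).det = Equiv.Perm.sign σ * (B.submatrix g id).det :=
    det_permute σ (B.submatrix g id)
  have hdetA (g : Fin k → ι) :
      (A.submatrix id g).det =
        ∑ σ : Equiv.Perm (Fin k), Equiv.Perm.sign σ * ∏ i, A i (g (σ i)) := by
    rw [← det_transpose, det_apply']
    rfl
  calc (A * B).det = ∑ f : Fin k → ι with Function.Injective f,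
        (∏ i, A i (f i)) * (B.submatrix f id).det := by
        rw [det_mul_eq_sum_prod_mul_det, sum_filter_of_ne fun f _ h => not_not.mp
          (mt (fun hf => by rw [hnoninj f hf, mul_zero]) h)]
    _ = ∑ p ∈ ({g | StrictMono g} : Finset (Fin k → ι)) ×ˢ (univ : Finset (Equiv.Perm (Fin k))),
        (∏ i, A i (p.1 (p.2 i))) * (B.submatrix (p.1 ∘ p.2) id).det := by
        refine (sum_nbij (fun p : (Fin k → ι) × Equiv.Perm (Fin k) => p.1 ∘ p.2) ?_ ?_ ?_
          fun _ _ => rfl).symm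
        · intro p hp
          simp only [mem_product, mem_filter_univ, mem_univ, and_true] at hp ⊢
          exact hp.injective.comp p.2.injective
        · rintro ⟨g, σ⟩ hg ⟨g', σ'⟩ hg' h
          simp only [coe_product, coe_filter, mem_univ, true_and, coe_univ, Set.mem_prod,
            Set.mem_ofPred_eq, Set.mem_univ, and_true] at hg hg' h
          have hrange : Set.range g = Set.range g' := by
            simpa only [Set.range_comp, Equiv.range_eq_univ, Set.image_univ] using
              congrArg Set.range h
          obtain rfl := (hg.range_inj hg').mp hrange
          exact Prod.ext rfl (Equiv.ext fun i => hg.injective (congrFun h i))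
        · intro f hf
          simp only [coe_filter, mem_univ, true_and, Set.mem_ofPred_eq] at hf
          refine ⟨(f ∘ Tuple.sort f, (Tuple.sort f).symm), ?_, ?_⟩
          · simpa using (Tuple.monotone_sort f).strictMono_of_injective
              (hf.comp (Tuple.sort f).injective)
          · ext i; simp
    _ = ∑ g : Fin k → ι with StrictMono g, (A.submatrix id g).det * (B.submatrix g id).det := by
        rw [sum_product]
        refine sum_congr rfl fun g _ => ?_
        simp only [hperm, hdetA, sum_mul]
        refine sum_congr rfl fun σ _ => ?_
        ring

theorem det_mul_nonneg_of_minors_nonneg [PartialOrder R] [IsOrderedRing R] [LinearOrder ι]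
    (A : Matrix (Fin k) ι R) (B : Matrix ι (Fin k) R)
    (hA : ∀ g, StrictMono g → 0 ≤ (A.submatrix id g).det)
    (hB : ∀ g, StrictMono g → 0 ≤ (B.submatrix g id).det) : 0 ≤ (A * B).det := by
  rw [det_mul_eq_sum_strictMono]
  exact sum_nonneg fun g hg =>
    mul_nonneg (hA g (mem_filter.mp hg).2) (hB g (mem_filter.mp hg).2)

end Matrix

open Matrix

section TotalPositivity

def IsTPBelow (M : ℕ → ℕ → ℝ) (N : ℕ) : Prop :=
  ∀ k (rows cols : Fin k → ℕ), StrictMono rows → StrictMono cols → (∀ i, rows i < N) →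
    0 ≤ ((of M).submatrix rows cols).det

theorem isTPBelow_zero (M : ℕ → ℕ → ℝ) : IsTPBelow M 0
  | 0, _, _, _, _, _ => by simp
  | _ + 1, _, _, _, _, hN => absurd (hN 0) (Nat.not_lt_zero _)

variable {M P : ℕ → ℕ → ℝ}

theorem isTP_of_forall_isTPBelow (h : ∀ N, IsTPBelow M N) : IsTP M :=
  fun k rows cols hr hc => h (univ.sup rows + 1) k rows cols hr hc
    fun i => Nat.lt_succ_of_le (le_sup (mem_univ i))

theorem IsTP.comp_succ (h : IsTP M) : IsTP (fun i j => M (i + 1) j) :=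
  fun k rows cols hr hc => h k (fun i => rows i + 1) cols (fun _ _ hij => by simpa using hr hij) hc

theorem det_submatrix_eq_mul_of_rows_zero (hM : ∀ c, 0 < c → M 0 c = 0) {k : ℕ}
    {rows cols : Fin (k + 1) → ℕ} (h0 : rows 0 = 0) (hc : StrictMono cols) :
    ((of M).submatrix rows cols).det =
      M 0 (cols 0) * ((of M).submatrix (rows ∘ Fin.succ) (cols ∘ Fin.succ)).det := by
  rw [det_succ_row_zero, Fin.sum_univ_succ, sum_eq_zero fun j _ => ?_, add_zero]
  · simp [h0, Fin.succAbove_zero, Function.comp_def]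
  · rw [submatrix_apply, of_apply, h0, hM _ ((Nat.zero_le _).trans_lt (hc (Fin.succ_pos j))),
      mul_zero, zero_mul]

theorem sum_range_mul_eq_of_lowerTriangular (htri : ∀ n k, n < k → M n k = 0) (f : ℕ → ℝ) {n N : ℕ}
    (hn : n < N) : ∑ s ∈ range (n + 1), M n s * f s = ∑ s ∈ range N, M n s * f s :=
  sum_subset (range_subset_range.mpr hn) fun s _ hs => by
    rw [htri n s (by simpa using hs), zero_mul]

/-- `P` is the production matrix of `M`; the sum covers all of row `n` when `M` is lower
triangular. -/
def IsProductionMatrix (P M : ℕ → ℕ → ℝ) : Prop :=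
  ∀ n c, M (n + 1) c = ∑ s ∈ range (n + 1), M n s * P s c

theorem IsProductionMatrix.submatrix_succ_eq_mul (hPM : IsProductionMatrix P M)
    (htri : ∀ n k, n < k → M n k = 0) {k N : ℕ} (rows cols : Fin k → ℕ) (hN : ∀ i, rows i < N) :
    (of M).submatrix (fun i => rows i + 1) cols =
      (of M).submatrix rows (Fin.val : Fin N → ℕ) * (of P).submatrix Fin.val cols := by
  ext i j
  rw [submatrix_apply, of_apply, hPM, sum_range_mul_eq_of_lowerTriangular htri _ (hN i),
    ← Fin.sum_univ_eq_sum_range]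
  rfl

theorem IsProductionMatrix.isTPBelow_succ (hPM : IsProductionMatrix P M)
    (htri : ∀ n k, n < k → M n k = 0) (h00 : 0 ≤ M 0 0) (hP : IsTP P) {N : ℕ}
    (ih : IsTPBelow M N) : IsTPBelow M (N + 1) := by
  intro k
  induction k with
  | zero => intro _ _ _ _ _; simp
  | succ k ihk =>
    intro rows cols hr hc hN
    by_cases h0 : rows 0 = 0
    · rw [det_submatrix_eq_mul_of_rows_zero (fun c hc => htri 0 c hc) h0 hc]
      refine mul_nonneg ?_ (ihk _ _ (hr.comp Fin.strictMono_succ) (hc.comp Fin.strictMono_succ)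
        fun i => hN i.succ)
      rcases Nat.eq_zero_or_pos (cols 0) with h | h
      · rwa [h]
      · rw [htri 0 _ h]
    · have hpos (i) : 0 < rows i :=
        (Nat.pos_of_ne_zero h0).trans_le (hr.monotone (Fin.zero_le i))
      obtain ⟨m, rfl⟩ : ∃ m : Fin (k + 1) → ℕ, rows = fun i => m i + 1 :=
        ⟨fun i => rows i - 1, funext fun i => (Nat.sub_add_cancel (hpos i)).symm⟩
      have hm : StrictMono m := fun _ _ hij => Nat.succ_lt_succ_iff.mp (hr hij)
      rw [hPM.submatrix_succ_eq_mul htri m cols (N := N) fun i => Nat.succ_lt_succ_iff.mp (hN i)]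
      exact det_mul_nonneg_of_minors_nonneg _ _
        (fun g hg => ih _ _ _ hm (Fin.val_strictMono.comp hg)
          fun i => Nat.succ_lt_succ_iff.mp (hN i))
        (fun g hg => hP _ _ _ (Fin.val_strictMono.comp hg) hc)

theorem IsProductionMatrix.isTP (hPM : IsProductionMatrix P M) (htri : ∀ n k, n < k → M n k = 0)
    (h00 : 0 ≤ M 0 0) (hP : IsTP P) : IsTP M :=
  isTP_of_forall_isTPBelow fun N =>
    N.rec (isTPBelow_zero M) fun _ ih => hPM.isTPBelow_succ htri h00 hP ih

end TotalPositivity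

theorem isProductionMatrix_toeplitz_of_quasiConsistent {a z : ℕ → ℝ}
    (hcons : ∀ n, z n = a (n + 1))
    {R : ℕ → ℕ → ℝ} (htri : ∀ n k, n < k → R n k = 0)
    (hZ : ∀ n, R (n + 1) 0 = ∑ j ∈ Finset.range (n + 1), z j * R n j)
    (hA : ∀ n k, R (n + 1) (k + 1) = ∑ j ∈ Finset.range (n + 1), a j * R n (k + j)) :
    IsProductionMatrix (fun i j => toeplitz a (i + 1) j) R := by
  intro n c
  cases c with
  | zero =>
    rw [hZ]
    exact sum_congr rfl fun j _ => by simp [toeplitz, hcons, mul_comm]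
  | succ c =>
    symm
    rw [sum_range_mul_eq_of_lowerTriangular htri _ (show n < c + (n + 1) by omega), sum_range_add,
      sum_eq_zero fun s hs => ?_, zero_add, hA]
    · exact sum_congr rfl fun j _ => by simp [toeplitz, mul_comm]
    · simp only [toeplitz]
      rw [if_neg (by have := mem_range.mp hs; omega), mul_zero]

theorem quasiConsistent_riordan_TP_of_PF_general (a z : ℕ → ℝ)
    (hcons : ∀ n, z n = a (n + 1))
    (R : ℕ → ℕ → ℝ)
    (hR00 : R 0 0 = 1)
    (htri : ∀ n k, n < k → R n k = 0)
    (hZ : ∀ n, R (n + 1) 0 = ∑ j ∈ Finset.range (n + 1), z j * R n j)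
    (hA : ∀ n k, R (n + 1) (k + 1) = ∑ j ∈ Finset.range (n + 1), a j * R n (k + j))
    (hPF : IsPF a) :
    IsTP R :=
  (isProductionMatrix_toeplitz_of_quasiConsistent hcons htri hZ hA).isTP htri
    (hR00 ▸ zero_le_one) hPF.comp_succ

theorem quasiConsistent_riordan_TP_of_PF (a z : ℕ → ℝ) (ha : ∀ n, 0 ≤ a n) (hz : ∀ n, 0 ≤ z n)
    (hcons : ∀ n, z n = a (n + 1))
    (R : ℕ → ℕ → ℝ)
    (hR00 : R 0 0 = 1)
    (htri : ∀ n k, n < k → R n k = 0)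
    (hZ : ∀ n, R (n + 1) 0 = ∑ j ∈ Finset.range (n + 1), z j * R n j)
    (hA : ∀ n k, R (n + 1) (k + 1) = ∑ j ∈ Finset.range (n + 1), a j * R n (k + j))
    (hPF : IsPF a) :
    IsTP R :=
  quasiConsistent_riordan_TP_of_PF_general a z hcons R hR00 htri hZ hA hPF
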